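/- arXiv:2001.04577 — 6 statements merged into one kernel-verified Lean document; each statement's English description precedes it below -/
import Mathlib

section
/- If a t×n binary matrix M satisfies that M ⊙ x ≠ M ⊙ x' for all distinct binary vectors x, x' each of Hamming weight at most k, then M is (k-1)-disjunct. -/
def Disjunct (t n k : ℕ) (M : Fin t → Fin n → Bool) : Prop :=
  ∀ (j : Fin n) (T : Finset (Fin n)), j ∉ T → T.card ≤ k →
    ∃ i : Fin t, M i j = true ∧ ∀ j' ∈ T, M i j' = false

def orVec {t n : ℕ} (M : Fin t → Fin n → Bool) (x : Fin n → Bool) : Fin t → Bool :=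
  fun i => decide (∃ j, x j = true ∧ M i j = true)

/-- If `M ⊙ x ≠ M ⊙ x'` for all distinct binary vectors `x ≠ x'` of Hamming weight
at most `k`, then `M` is `(k-1)`-disjunct. -/
theorem stmt3 (t n k : ℕ) (hk : 1 ≤ k) (M : Fin t → Fin n → Bool)
    (h : ∀ x x' : Fin n → Bool,
      (Finset.univ.filter (fun j => x j = true)).card ≤ k →
      (Finset.univ.filter (fun j => x' j = true)).card ≤ k →
      x ≠ x' → orVec M x ≠ orVec M x') :
    Disjunct t n (k - 1) M := by
  intro j T hjT hT
  set x : Fin n → Bool := fun j' => decide (j' ∈ insert j T) with hx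
  set x' : Fin n → Bool := fun j' => decide (j' ∈ T) with hx'
  have hfx : (Finset.univ.filter (fun j' => x j' = true)) = insert j T := by
    ext a; simp [hx]
  have hfx' : (Finset.univ.filter (fun j' => x' j' = true)) = T := by
    ext a; simp [hx']
  have hcard : (insert j T).card ≤ k := by
    rw [Finset.card_insert_of_notMem hjT]
    omega
  have hne : x ≠ x' := by
    intro he
    have := congrFun he j
    simp [hx, hx', hjT] at this
  have hor := h x x' (by rw [hfx]; exact hcard) (by rw [hfx']; omega) hne
  have : ∃ i, orVec M x i ≠ orVec M x' i := by
    by_contra hc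
    push_neg at hc
    exact hor (funext hc)
  obtain ⟨i, hi⟩ := this
  refine ⟨i, ?_, ?_⟩
  · -- orVec M x' i must be false, orVec M x i true
    by_cases hMj : M i j = true
    · exact hMj
    · exfalso
      apply hi
      simp only [orVec, hx, hx', decide_eq_decide]
      constructor
      · rintro ⟨a, ha, hMa⟩
        simp only [decide_eq_true_eq, Finset.mem_insert] at ha
        rcases ha with rfl | ha
        · exact absurd hMa hMj
        · exact ⟨a, by simp [ha], hMa⟩
      · rintro ⟨a, ha, hMa⟩
        simp only [decide_eq_true_eq] at ha
        exact ⟨a, by simp [ha], hMa⟩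
  · intro j' hj' 
    by_contra hMa
    apply hi
    simp only [orVec, hx, hx', decide_eq_decide]
    constructor
    · rintro ⟨a, -, -⟩
      exact ⟨j', by simp [hj'], by simpa using hMa⟩
    · rintro ⟨a, ha, hMa'⟩
      simp only [decide_eq_true_eq] at ha
      exact ⟨a, by simp [ha], hMa'⟩
end

section
/- Let M be a t×n binary matrix and j a column index. If S and S' are subsets of [t] such that S is (M,j)-private and S' is (M,j')-private with j ≠ j', then S ≠ S'. Consequently, if every column j of M admits an (M,j)-private set of size at most m, then n ≤ Σ_{i=0}^{m} C(t, i). -/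
/- A set private for `j` and `j'` would contain a row with a zero in column `j'`, yet `M` is `1`
on all of its rows in column `j'`; so private sets determine their column, and choosing one of
size at most `m` per column embeds the columns into the sets of size at most `m`. -/

/-- `S ⊆ [t]` is `(M,j)`-private: `M i j = 1` for all `i ∈ S`, and every other
column `j'` has a zero inside `S`. -/
def IsPrivate {t n : ℕ} (M : Fin t → Fin n → Bool) (j : Fin n) (S : Finset (Fin t)) : Prop :=
  (∀ i ∈ S, M i j = true) ∧ ∀ j' : Fin n, j' ≠ j → ∃ i ∈ S, M i j' = false

open Finset

lemma Finset.card_le_sum_choose_of_forall_card_le {α : Type*} [Fintype α]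
    {𝒜 : Finset (Finset α)} {m : ℕ} (h𝒜 : ∀ s ∈ 𝒜, #s ≤ m) :
    #𝒜 ≤ ∑ k ∈ range (m + 1), (Fintype.card α).choose k := by
  classical
  simp_rw [← card_univ, ← card_powersetCard]
  refine (card_le_card fun s hs ↦ mem_biUnion.2 ⟨#s, ?_⟩).trans card_biUnion_le
  exact ⟨mem_range_succ_iff.2 (h𝒜 s hs), mem_powersetCard_univ.2 rfl⟩

lemma IsPrivate.column_eq {t n : ℕ} {M : Fin t → Fin n → Bool} {j j' : Fin n}
    {S : Finset (Fin t)} (h : IsPrivate M j S) (h' : IsPrivate M j' S) : j' = j := by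
  by_contra hne
  obtain ⟨i, hi, hzero⟩ := h.2 j' hne
  simp [h'.1 i hi] at hzero

theorem stmt4 (t n m : ℕ) (M : Fin t → Fin n → Bool) :
    (∀ (j j' : Fin n) (S S' : Finset (Fin t)), j ≠ j' →
      IsPrivate M j S → IsPrivate M j' S' → S ≠ S') ∧
    ((∀ j : Fin n, ∃ S : Finset (Fin t), IsPrivate M j S ∧ S.card ≤ m) →
      n ≤ ∑ i ∈ Finset.range (m + 1), Nat.choose t i) := by
  refine ⟨fun j j' S S' hjj' hS hS' hSS' ↦ hjj' (hS.column_eq (hSS' ▸ hS')).symm, fun h ↦ ?_⟩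
  choose S hS hcard using h
  have hinj : Function.Injective S := fun j j' hjj' ↦ (hS j').column_eq (hjj' ▸ hS j)
  calc n = #(univ.image S) := by rw [card_image_of_injective _ hinj, card_univ, Fintype.card_fin]
    _ ≤ ∑ k ∈ range (m + 1), t.choose k := by
      simpa using card_le_sum_choose_of_forall_card_le (m := m) (𝒜 := univ.image S)
        (by simpa using hcard)
end

section
/- Let M be a k-disjunct t×n binary matrix (with n ≥ 2) all of whose columns have Hamming weight at most w, where k < w. Then every column index j ∈ [n] admits an (M,j)-private set of size at most ⌈w/k⌉ (in particular at most 2w/k). -/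
/-- A `k`-disjunct matrix with column weights `≤ w`, `0 < k < w`, `n ≥ 2`, has for each
column `j` an `(M,j)`-private set of size at most `⌈w/k⌉` (in particular `≤ 2w/k`). -/
theorem stmt5 (t n k w : ℕ) (hn : 2 ≤ n) (hk : 0 < k) (hkw : k < w)
    (M : Fin t → Fin n → Bool)
    (hM : Disjunct t n k M)
    (hw : ∀ j : Fin n, (Finset.univ.filter (fun i => M i j = true)).card ≤ w) :
    ∀ j : Fin n, ∃ S : Finset (Fin t), IsPrivate M j S ∧
      S.card ≤ ⌈(w : ℚ) / k⌉₊ ∧ (S.card : ℚ) ≤ 2 * w / k := by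
  intro j
  have : NeZero n := ⟨by omega⟩
  classical
  set W : Finset (Fin t) := Finset.univ.filter (fun i => M i j = true) with hWdef
  set c : ℕ := ⌈(w : ℚ) / k⌉₊ with hcdef
  have hkQ : (0:ℚ) < k := by exact_mod_cast hk
  have hwQ : (0:ℚ) < w := by exact_mod_cast (by omega : 0 < w)
  have hwpos : (0:ℚ) < (w:ℚ)/k := div_pos hwQ hkQ
  have hc1 : 0 < c := Nat.one_le_ceil_iff.mpr hwpos
  have hcw : w ≤ k * c := by
    have h := Nat.le_ceil ((w : ℚ)/k)
    rw [div_le_iff₀ hkQ] at h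
    have : (w:ℚ) ≤ k * c := by rw [mul_comm]; exact_mod_cast h
    exact_mod_cast this
  have hc2 : (c:ℚ) ≤ 2 * w / k := by
    have h1 : (c:ℚ) < (w:ℚ)/k + 1 := Nat.ceil_lt_add_one hwpos.le
    have h2 : (1:ℚ) ≤ (w:ℚ)/k := by
      rw [le_div_iff₀ hkQ]; simpa using (by exact_mod_cast hkw.le : (k:ℚ) ≤ w)
    have h3 : 2 * (w:ℚ) / k = (w:ℚ)/k + (w:ℚ)/k := by ring
    linarith
  set L : List (Fin t) := W.toList with hLdef
  have hlen : L.length = W.card := Finset.length_toList W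
  have hWw : W.card ≤ w := hw j
  set S : ℕ → Finset (Fin t) := fun p => ((L.drop (p*c)).take c).toFinset with hSdef
  have hSsub : ∀ p, S p ⊆ W := by
    intro p i hi
    rw [hSdef] at hi
    simp only [List.mem_toFinset] at hi
    have := List.mem_of_mem_drop (List.mem_of_mem_take hi)
    rwa [hLdef, Finset.mem_toList] at this
  have hScard : ∀ p, (S p).card ≤ c := by
    intro p
    refine le_trans (List.toFinset_card_le _) ?_
    exact List.length_take_le c _
  have hmem : ∀ i ∈ W, ∃ p < k, i ∈ S p := by
    intro i hi
    have hiL : i ∈ L := by rwa [hLdef, Finset.mem_toList]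
    obtain ⟨idx, hidx, hget⟩ := List.mem_iff_getElem.mp hiL
    refine ⟨idx / c, ?_, ?_⟩
    · rw [Nat.div_lt_iff_lt_mul hc1]
      calc idx < L.length := hidx
        _ ≤ w := hlen ▸ hWw
        _ ≤ k * c := hcw
    · have h1 : (idx / c) * c + idx % c = idx := by
        rw [mul_comm]; exact Nat.div_add_mod idx c
      have hlt : (idx / c) * c + idx % c < L.length := by omega
      have hdroplt : idx % c < (L.drop ((idx/c)*c)).length := by
        rw [List.length_drop]; omega
      have hmc : idx % c < c := Nat.mod_lt idx hc1
      have : ((L.drop ((idx/c)*c)).take c)[idx % c]'(by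
          rw [List.length_take]; omega) = i := by
        rw [List.getElem_take, List.getElem_drop]
        simp only [h1]; exact hget
      rw [hSdef]
      simp only [List.mem_toFinset]
      rw [← this]
      exact List.getElem_mem _
  have key : ∃ p < k, IsPrivate M j (S p) := by
    by_contra hnot
    push_neg at hnot
    have hfirst : ∀ p, ∀ i ∈ S p, M i j = true := by
      intro p i hi
      have := hSsub p hi
      rw [hWdef, Finset.mem_filter] at this
      exact this.2
    have hch : ∀ p ∈ Finset.range k, ∃ j' : Fin n, j' ≠ j ∧ ∀ i ∈ S p, M i j' = true := by
      intro p hp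
      rw [Finset.mem_range] at hp
      have h := hnot p hp
      rw [IsPrivate] at h
      push_neg at h
      obtain ⟨j', hj', hall⟩ := h (hfirst p)
      exact ⟨j', hj', fun i hi => by simpa using hall i hi⟩ -- ok
    choose! g hg1 hg2 using hch
    set T : Finset (Fin n) := (Finset.range k).image g with hTdef
    have hjT : j ∉ T := by
      rw [hTdef]
      simp only [Finset.mem_image]
      rintro ⟨p, hp, hgp⟩
      exact hg1 p hp hgp
    have hTcard : T.card ≤ k := le_trans Finset.card_image_le (by simp)
    obtain ⟨i, hij, hT⟩ := hM j T hjT hTcard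
    have hiW : i ∈ W := by rw [hWdef, Finset.mem_filter]; exact ⟨Finset.mem_univ _, hij⟩
    obtain ⟨p, hpk, hpS⟩ := hmem i hiW
    have hgpT : g p ∈ T := by
      rw [hTdef]; exact Finset.mem_image_of_mem g (Finset.mem_range.mpr hpk)
    have := hT (g p) hgpT
    have := hg2 p (Finset.mem_range.mpr hpk) i hpS
    simp_all
  obtain ⟨p, hpk, hpriv⟩ := key
  refine ⟨S p, hpriv, hScard p, ?_⟩
  calc ((S p).card : ℚ) ≤ c := by exact_mod_cast hScard p
    _ ≤ 2 * w / k := hc2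
end

section
/- Every d-runlength constrained k-disjunct t×n binary matrix satisfies t ≥ min(n, 1 + k(d+1)). -/
def RunLengthConstrained (t d : ℕ) (x : Fin t → Bool) : Prop :=
  ∀ i i' : Fin t, i < i' → x i = true → x i' = true →
    d ≤ (Finset.univ.filter (fun j : Fin t => i < j ∧ j < i' ∧ x j = false)).card

/-- Every `d`-runlength `k`-disjunct `t × n` matrix satisfies `t ≥ min(n, 1 + k(d+1))`. -/
theorem stmt6 (t n k d : ℕ) (M : Fin t → Fin n → Bool)
    (hrl : ∀ j : Fin n, RunLengthConstrained t d (fun i => M i j))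
    (hM : Disjunct t n k M) :
    min n (1 + k * (d + 1)) ≤ t := by
  classical
  by_cases hcase : ∃ j : Fin n, k + 1 ≤ (Finset.univ.filter (fun i => M i j = true)).card
  · -- Some column has weight ≥ k+1: run-length forces t ≥ 1 + k(d+1)
    obtain ⟨j, hj⟩ := hcase
    obtain ⟨s, hs, hscard⟩ := Finset.exists_subset_card_eq hj
    set f := s.orderEmbOfFin hscard with hf
    have hmem : ∀ m : Fin (k+1), M (f m) j = true := by
      intro m
      have : f m ∈ s := Finset.orderEmbOfFin_mem s hscard m
      have := hs this
      simpa using this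
    have key : ∀ m : ℕ, (h : m < k + 1) → m * (d + 1) ≤ (f ⟨m, h⟩ : ℕ) := by
      intro m
      induction m with
      | zero => intro h; simp
      | succ m ih =>
        intro h
        have hm : m < k + 1 := Nat.lt_of_succ_lt h
        have hlt : f ⟨m, hm⟩ < f ⟨m+1, h⟩ := by
          apply (s.orderEmbOfFin hscard).strictMono
          exact Fin.mk_lt_mk.mpr (Nat.lt_succ_self m)
        have hrun := hrl j (f ⟨m, hm⟩) (f ⟨m+1, h⟩) hlt (hmem _) (hmem _)
        have hsub : (Finset.univ.filter (fun i : Fin t =>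
            f ⟨m, hm⟩ < i ∧ i < f ⟨m+1, h⟩ ∧ M i j = false)) ⊆
            Finset.Ioo (f ⟨m, hm⟩) (f ⟨m+1, h⟩) := by
          intro i hi
          simp only [Finset.mem_filter, Finset.mem_Ioo] at hi ⊢
          exact ⟨hi.2.1, hi.2.2.1⟩
        have hcard := Finset.card_le_card hsub
        rw [Fin.card_Ioo] at hcard
        have hd : d ≤ (f ⟨m+1, h⟩ : ℕ) - (f ⟨m, hm⟩ : ℕ) - 1 := le_trans hrun hcard
        have hltv : (f ⟨m, hm⟩ : ℕ) < (f ⟨m+1, h⟩ : ℕ) := hlt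
        have := ih hm
        have hstep : (f ⟨m, hm⟩ : ℕ) + (d + 1) ≤ (f ⟨m+1, h⟩ : ℕ) := by omega
        calc (m + 1) * (d + 1) = m * (d + 1) + (d + 1) := by ring
          _ ≤ (f ⟨m, hm⟩ : ℕ) + (d + 1) := Nat.add_le_add_right this _
          _ ≤ (f ⟨m+1, h⟩ : ℕ) := hstep
    have hk : k * (d + 1) ≤ (f ⟨k, Nat.lt_succ_self k⟩ : ℕ) := key k (Nat.lt_succ_self k)
    have ht : (f ⟨k, Nat.lt_succ_self k⟩ : ℕ) < t := (f ⟨k, Nat.lt_succ_self k⟩).isLt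
    have : 1 + k * (d + 1) ≤ t := by omega
    exact le_trans (min_le_right _ _) this
  · -- All columns have weight ≤ k: each column has a private row, so n ≤ t
    push_neg at hcase
    have hpriv : ∀ j : Fin n, ∃ i : Fin t, M i j = true ∧ ∀ j' : Fin n, j' ≠ j → M i j' = false := by
      intro j
      by_contra hno
      push_neg at hno
      -- for each row i with M i j = true, there is another column covering it
      have hcover : ∀ i : Fin t, M i j = true → ∃ j' : Fin n, j' ≠ j ∧ M i j' = true := by
        intro i hi
        obtain ⟨j', hj', hMij'⟩ := hno i hi
        exact ⟨j', hj', by simpa using hMij'⟩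
      set g : Fin t → Fin n := fun i =>
        if h : M i j = true then (hcover i h).choose else j with hg
      set T : Finset (Fin n) := (Finset.univ.filter (fun i => M i j = true)).image g with hT
      have hjT : j ∉ T := by
        simp only [hT, Finset.mem_image, Finset.mem_filter, Finset.mem_univ, true_and]
        rintro ⟨i, hi, hgi⟩
        have := (hcover i hi).choose_spec.1
        rw [hg] at hgi
        simp only [hi, dif_pos] at hgi
        exact this hgi
      have hTcard : T.card ≤ k := by
        calc T.card ≤ (Finset.univ.filter (fun i => M i j = true)).card :=
              Finset.card_image_le
          _ ≤ k := Nat.lt_succ_iff.mp (hcase j)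
      obtain ⟨i, hij, hiT⟩ := hM j T hjT hTcard
      have hgi : g i ∈ T := by
        simp only [hT, Finset.mem_image, Finset.mem_filter, Finset.mem_univ, true_and]
        exact ⟨i, hij, rfl⟩
      have := hiT (g i) hgi
      have hgit : M i (g i) = true := by
        rw [hg]; simp only [hij, dif_pos]; exact (hcover i hij).choose_spec.2
      rw [hgit] at this
      exact absurd this (by simp)
    choose pr hpr1 hpr2 using hpriv
    have hinj : Function.Injective pr := by
      intro a b hab
      by_contra hne
      have h1 := hpr1 a
      have h2 := hpr2 b a hne
      rw [hab] at h1
      rw [h1] at h2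
      exact absurd h2 (by simp)
    have : n ≤ t := by
      have := Fintype.card_le_of_injective pr hinj
      simpa using this
    exact le_trans (min_le_left _ _) this
end

section
/- Let M be a t×n binary matrix that is d-runlength constrained, and suppose the map x ↦ M ⊙ x is injective on the set of binary vectors of Hamming weight exactly k. Then C(n, k) ≤ Σ_{i=0}^{⌊kt/(d+1)⌋} C(t, i), i.e., the number of k-subsets of [n] is at most the volume of the Hamming ball of radius kt/(d+1) in {0,1}^t. -/
/-! Two `1`s of a `d`-runlength constrained column are at least `d + 1` apart, so they lie in
different blocks of `d + 1` consecutive rows; hence every column has weight at most `t / (d + 1)`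
and `M ⊙ x` has weight at most `k t / (d + 1)` when `x` has weight `k`. Injectivity therefore
embeds the `k`-subsets of `[n]` into the Hamming ball of that radius in `{0,1}^t`. -/

open Finset

theorem RunLengthConstrained.add_lt {t d : ℕ} {x : Fin t → Bool}
    (hx : RunLengthConstrained t d x) {a b : Fin t} (hab : a < b) (ha : x a = true)
    (hb : x b = true) : (a : ℕ) + d < b := by
  have hgap : d ≤ #(Ioo a b) :=
    (hx a b hab ha hb).trans <| card_le_card fun j hj => by
      simp only [mem_filter, mem_Ioo] at hj ⊢
      exact ⟨hj.2.1, hj.2.2.1⟩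
  have hab' : (a : ℕ) < b := hab
  rw [Fin.card_Ioo] at hgap
  omega

theorem RunLengthConstrained.strictMonoOn_div {t d : ℕ} {x : Fin t → Bool}
    (hx : RunLengthConstrained t d x) :
    StrictMonoOn (fun i : Fin t => (i : ℕ) / (d + 1)) {i | x i = true} := by
  intro a ha b hb hab
  calc (a : ℕ) / (d + 1) < ((a : ℕ) + (d + 1)) / (d + 1) := by
        rw [Nat.add_div_right _ (by omega : 0 < d + 1)]
        omega
    _ ≤ b / (d + 1) := Nat.div_le_div_right (by have := hx.add_lt hab ha hb; omega)

theorem RunLengthConstrained.card_filter_le {t d : ℕ} {x : Fin t → Bool}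
    (hx : RunLengthConstrained t d x) (hdvd : d + 1 ∣ t) :
    #{i | x i = true} ≤ t / (d + 1) := by
  simpa using card_le_card_of_injOn (fun i : Fin t => (i : ℕ) / (d + 1))
    (t := range (t / (d + 1))) (fun i _ => mem_range.2 (Nat.div_lt_div_of_lt_of_dvd hdvd i.isLt))
    (by simpa using hx.strictMonoOn_div.injOn)

theorem card_filter_orVec_le {t n c : ℕ} (M : Fin t → Fin n → Bool) (x : Fin n → Bool)
    (hcol : ∀ j, #{i | M i j = true} ≤ c) :
    #{i | orVec M x i = true} ≤ #{j | x j = true} * c :=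
  calc #{i | orVec M x i = true}
      ≤ #(({j | x j = true} : Finset (Fin n)).biUnion fun j => {i | M i j = true}) :=
        card_le_card fun i hi => by simpa [orVec] using hi
    _ ≤ _ := card_biUnion_le_card_mul _ _ _ fun j _ => hcol j

theorem card_filter_card_le_eq_sum_choose {β : Type*} [Fintype β] (r : ℕ) :
    #{s : Finset β | #s ≤ r} = ∑ i ∈ range (r + 1), (Fintype.card β).choose i := by
  rw [card_eq_sum_card_fiberwise (f := Finset.card) (t := range (r + 1))
    fun s hs => mem_range.2 (Nat.lt_succ_of_le (mem_filter.1 hs).2)]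
  refine sum_congr rfl fun i hi => ?_
  have hir : i ≤ r := Nat.lt_succ_iff.1 (mem_range.1 hi)
  rw [filter_filter, ← card_univ, ← card_powersetCard]
  congr 1
  ext s
  simp only [mem_filter, mem_univ, true_and, mem_powersetCard_univ]
  exact and_iff_right_of_imp fun h => h ▸ hir

theorem choose_le_sum_choose_of_injOn {α β : Type*} [Fintype α] [Fintype β] {k r : ℕ}
    (f : Finset α → Finset β) (hf : Set.InjOn f {s | #s = k}) (hr : ∀ s, #s = k → #(f s) ≤ r) :
    (Fintype.card α).choose k ≤ ∑ i ∈ range (r + 1), (Fintype.card β).choose i := by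
  rw [← card_filter_card_le_eq_sum_choose, ← card_univ, ← card_powersetCard]
  exact card_le_card_of_injOn f (fun s hs => by simp_all)
    fun s hs s' hs' => hf (by simpa using hs) (by simpa using hs')

theorem filter_eq_true_injective {α : Type*} [Fintype α] :
    Function.Injective fun x : α → Bool => ({a | x a = true} : Finset α) := by
  intro x y h
  funext a
  simpa using congrArg (a ∈ ·) h

/-- If `M` is `d`-runlength constrained and `x ↦ M ⊙ x` is injective on binary vectors
of weight exactly `k`, then `C(n,k) ≤ Σ_{i=0}^{⌊kt/(d+1)⌋} C(t,i)`. -/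
theorem stmt10 (t n k d : ℕ) (hdvd : (d + 1) ∣ t) (M : Fin t → Fin n → Bool)
    (hrl : ∀ j : Fin n, RunLengthConstrained t d (fun i => M i j))
    (hinj : ∀ x x' : Fin n → Bool,
      (Finset.univ.filter (fun j => x j = true)).card = k →
      (Finset.univ.filter (fun j => x' j = true)).card = k →
      orVec M x = orVec M x' → x = x') :
    Nat.choose n k ≤ ∑ i ∈ Finset.range (k * t / (d + 1) + 1), Nat.choose t i := by
  let ind : Finset (Fin n) → Fin n → Bool := fun S j => decide (j ∈ S)
  have hind : ∀ S, #{j | ind S j = true} = #S := fun S => by simp [ind]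
  have hind_inj : Function.Injective ind := fun S S' h => by
    ext j
    simpa [ind] using congrFun h j
  have hcol : ∀ j, #{i | M i j = true} ≤ t / (d + 1) := fun j => (hrl j).card_filter_le hdvd
  have hinjOn : Set.InjOn (fun S => ({i | orVec M (ind S) i = true} : Finset (Fin t)))
      {S | #S = k} := fun S hS S' hS' h =>
    hind_inj <| hinj _ _ ((hind S).trans hS) ((hind S').trans hS') (filter_eq_true_injective h)
  have hweight : ∀ S : Finset (Fin n), #S = k → #{i | orVec M (ind S) i = true} ≤ k * t / (d + 1) :=
    fun S hS => by
      rw [Nat.mul_div_assoc k hdvd, ← hS, ← hind S]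
      exact card_filter_orVec_le M _ hcol
  simpa using choose_le_sum_choose_of_injOn _ hinjOn hweight
end

section
/- Let Z be an integer-valued random variable with finite variance σ². Then its Shannon entropy satisfies H(Z) ≤ (1/2) log₂(2πe(σ² + 1/12)). -/
open MeasureTheory ProbabilityTheory

/-- Shannon entropy (base 2) of an integer-valued random variable. Note that
`Real.logb 2 0 = 0`, so the convention `0·log 0 = 0` is automatic. -/
noncomputable def intEntropy {Ω : Type*} [MeasurableSpace Ω] (μ : Measure Ω)
    (Z : Ω → ℤ) : ℝ :=
  -∑' i : ℤ, (μ (Z ⁻¹' {i})).toReal * Real.logb 2 (μ (Z ⁻¹' {i})).toReal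

/-!
Write `p i = P(Z = i)`, `m` for the mean, `σ²` for the variance and `v = σ² + 1/12`, and compare
`p` with `q i = (2πv)^(-1/2) exp (-((i - m)² + 1/12) / (2v))`. The uniform distribution on the
cell `[i - 1/2, i + 1/2]` has mean `i` and variance `1/12`, so Jensen's inequality for `exp` on that
cell bounds `q i` by the `N(m, v)`-mass of the cell; the cells tile `ℝ`, hence `∑ q i ≤ 1`.
Gibbs' inequality then gives, in nats,
`H(p) ≤ -∑ p i log (q i) = (σ² + 1/12) / (2v) + log (2πv) / 2 = log (2πe v) / 2`.
-/
open Real NNReal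

lemma negMulLog_le_neg_mul_log_add_sub {x y : ℝ} (hx : 0 ≤ x) (hy : 0 < y) :
    negMulLog x ≤ -(x * log y) + (y - x) := by
  rcases hx.eq_or_lt with rfl | hx
  · simpa using hy.le
  have h := mul_le_mul_of_nonneg_left (log_le_sub_one_of_pos (div_pos hy hx)) hx.le
  rw [log_div hy.ne' hx.ne', mul_sub_one, mul_div_cancel₀ _ hx.ne'] at h
  rw [negMulLog]
  linarith

lemma tsum_negMulLog_le_of_tsum_le_one {ι : Type*} {p q : ι → ℝ} (hp0 : ∀ i, 0 ≤ p i)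
    (hp : HasSum p 1) (hq0 : ∀ i, 0 < q i) (hq : Summable q) (hq1 : ∑' i, q i ≤ 1)
    (hpq : Summable fun i ↦ p i * log (q i)) :
    ∑' i, negMulLog (p i) ≤ -∑' i, p i * log (q i) := by
  have hle i := negMulLog_le_neg_mul_log_add_sub (hp0 i) (hq0 i)
  have hbound : Summable fun i ↦ -(p i * log (q i)) + (q i - p i) :=
    hpq.neg.add (hq.sub hp.summable)
  have hnonneg i : 0 ≤ negMulLog (p i) :=
    negMulLog_nonneg (hp0 i) (le_hasSum hp i fun j _ ↦ hp0 j)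
  calc ∑' i, negMulLog (p i)
      ≤ ∑' i, (-(p i * log (q i)) + (q i - p i)) :=
        (hbound.of_nonneg_of_le hnonneg hle).tsum_le_tsum hle hbound
    _ = -∑' i, p i * log (q i) + (∑' i, q i - 1) := by
        rw [hpq.neg.tsum_add (hq.sub hp.summable), tsum_neg, hq.tsum_sub hp.summable, hp.tsum_eq]
    _ ≤ -∑' i, p i * log (q i) := by linarith

lemma exp_integral_le_integral_exp {α : Type*} [MeasurableSpace α] {μ : Measure α}
    [IsProbabilityMeasure μ] {f : α → ℝ} (hf : Integrable f μ)
    (hef : Integrable (fun x ↦ exp (f x)) μ) :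
    exp (∫ x, f x ∂μ) ≤ ∫ x, exp (f x) ∂μ :=
  convexOn_exp.map_integral_le continuousOn_exp isClosed_univ (by simp) hf hef

lemma exp_intervalIntegral_le (a : ℝ) {f : ℝ → ℝ} (hf : Continuous f) :
    exp (∫ x in a..a + 1, f x) ≤ ∫ x in a..a + 1, exp (f x) := by
  have : IsProbabilityMeasure (volume.restrict (Set.Ioc a (a + 1))) := ⟨by simp⟩
  simp only [intervalIntegral.integral_of_le (le_add_of_nonneg_right zero_le_one)]
  exact exp_integral_le_integral_exp hf.integrableOn_Ioc (continuous_exp.comp hf).integrableOn_Ioc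

lemma intervalIntegral_sub_sq (a m : ℝ) :
    ∫ x in a..a + 1, (x - m) ^ 2 = (a + 1 / 2 - m) ^ 2 + 1 / 12 := by
  rw [intervalIntegral.integral_comp_sub_right (fun x ↦ x ^ 2), integral_pow]
  ring

lemma hasSum_measureReal_preimage_singleton_mul {Ω β : Type*} [MeasurableSpace Ω]
    [MeasurableSpace β] [MeasurableSingletonClass β] [Countable β] {μ : Measure Ω}
    {Z : Ω → β} (hZ : Measurable Z) {F : β → ℝ} (hF : Integrable (fun ω ↦ F (Z ω)) μ) :
    HasSum (fun b ↦ μ.real (Z ⁻¹' {b}) * F b) (∫ ω, F (Z ω) ∂μ) := by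
  have h := hasSum_integral_iUnion (fun b ↦ hZ (measurableSet_singleton b))
    (fun b c hbc ↦ Set.disjoint_singleton.mpr hbc |>.preimage Z) hF.integrableOn
  rw [← Set.preimage_iUnion, Set.iUnion_of_singleton, Set.preimage_univ, setIntegral_univ] at h
  refine h.congr_fun fun b ↦ ?_
  rw [setIntegral_congr_fun (hZ (measurableSet_singleton b)) fun ω hω ↦ congrArg F hω,
    setIntegral_const, smul_eq_mul]

noncomputable def latticeGaussian (m : ℝ) (v : ℝ≥0) (i : ℤ) : ℝ :=
  (√(2 * π * v))⁻¹ * exp (-((i - m) ^ 2 + 1 / 12) / (2 * v))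

lemma latticeGaussian_pos (m : ℝ) {v : ℝ≥0} (hv : v ≠ 0) (i : ℤ) :
    0 < latticeGaussian m v i := by
  have : (0 : ℝ) < v := by positivity
  unfold latticeGaussian
  positivity

lemma log_latticeGaussian (m : ℝ) {v : ℝ≥0} (hv : v ≠ 0) (i : ℤ) :
    log (latticeGaussian m v i) = -((i - m) ^ 2 + 1 / 12) / (2 * v) - log √(2 * π * v) := by
  have : (0 : ℝ) < v := by positivity
  rw [latticeGaussian, log_mul (by positivity) (exp_ne_zero _), log_inv, log_exp]
  ring

lemma latticeGaussian_le_intervalIntegral (m : ℝ) (v : ℝ≥0) (i : ℤ) :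
    latticeGaussian m v i ≤ ∫ x in (i - 1 / 2 : ℝ)..(i - 1 / 2 + 1), gaussianPDFReal m v x := by
  have hexponent : -((i - m) ^ 2 + 1 / 12) / (2 * v)
      = ∫ x in (i - 1 / 2 : ℝ)..(i - 1 / 2 + 1), -(x - m) ^ 2 / (2 * v) := by
    rw [intervalIntegral.integral_div, intervalIntegral.integral_neg, intervalIntegral_sub_sq,
      sub_add_cancel]
  rw [latticeGaussian, hexponent, gaussianPDFReal_def, intervalIntegral.integral_const_mul]
  gcongr
  exact exp_intervalIntegral_le _ (by fun_prop)

lemma summable_latticeGaussian_and_tsum_le_one (m : ℝ) {v : ℝ≥0} (hv : v ≠ 0) :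
    Summable (latticeGaussian m v) ∧ ∑' i, latticeGaussian m v i ≤ 1 := by
  have hcells := (integrable_gaussianPDFReal m v).hasSum_intervalIntegral (-1 / 2)
  rw [integral_gaussianPDFReal_eq_one m hv] at hcells
  have hle i : latticeGaussian m v i
      ≤ ∫ x in (-1 / 2 + i : ℝ)..(-1 / 2 + i + 1), gaussianPDFReal m v x := by
    convert latticeGaussian_le_intervalIntegral m v i using 2 <;> ring
  have hsum := hcells.summable.of_nonneg_of_le (fun i ↦ (latticeGaussian_pos m hv i).le) hle
  exact ⟨hsum, hcells.tsum_eq ▸ hsum.tsum_le_tsum hle hcells.summable⟩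

lemma hasSum_mul_log_latticeGaussian {p : ℤ → ℝ} {m : ℝ} {v : ℝ≥0} (hv : v ≠ 0)
    (hp : HasSum p 1) (hpv : HasSum (fun i ↦ p i * (i - m) ^ 2) (v - 1 / 12)) :
    HasSum (fun i ↦ p i * log (latticeGaussian m v i)) (-(log (2 * π * exp 1 * v) / 2)) := by
  have hv' : (0 : ℝ) < v := by positivity
  have hvalue : -(log (2 * π * exp 1 * v) / 2)
      = -(v - 1 / 12 + 1 * (1 / 12)) / (2 * v) - 1 * log √(2 * π * v) := by
    rw [log_mul (by positivity) hv'.ne', log_mul (by positivity) (exp_ne_zero 1), log_exp,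
      log_sqrt (by positivity), log_mul (by positivity) hv'.ne']
    field_simp
    ring
  rw [hvalue]
  refine (((hpv.add (hp.mul_right (1 / 12))).neg.div_const (2 * (v : ℝ))).sub
    (hp.mul_right (log √(2 * π * v)))).congr_fun fun i ↦ ?_
  rw [log_latticeGaussian m hv]
  ring

lemma tsum_negMulLog_le_log_variance {p : ℤ → ℝ} {m s : ℝ} (hp0 : ∀ i, 0 ≤ p i)
    (hp : HasSum p 1) (hs : HasSum (fun i ↦ p i * (i - m) ^ 2) s) :
    ∑' i, negMulLog (p i) ≤ log (2 * π * exp 1 * (s + 1 / 12)) / 2 := by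
  have hs0 : 0 ≤ s := hs.nonneg fun i ↦ mul_nonneg (hp0 i) (sq_nonneg _)
  set v : ℝ≥0 := ⟨s + 1 / 12, by positivity⟩
  have hv : v ≠ 0 := ne_of_gt (show (0 : ℝ) < s + 1 / 12 by positivity)
  have hv_coe : (v : ℝ) = s + 1 / 12 := rfl
  have hpq := hasSum_mul_log_latticeGaussian (m := m) hv hp
    (by rwa [hv_coe, add_sub_cancel_right])
  obtain ⟨hq, hq1⟩ := summable_latticeGaussian_and_tsum_le_one m hv
  calc ∑' i, negMulLog (p i) ≤ -∑' i, p i * log (latticeGaussian m v i) :=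
        tsum_negMulLog_le_of_tsum_le_one hp0 hp (latticeGaussian_pos m hv) hq hq1 hpq.summable
    _ = log (2 * π * exp 1 * (s + 1 / 12)) / 2 := by rw [hpq.tsum_eq, neg_neg, hv_coe]

/-- Massey's bound: `H(Z) ≤ (1/2)·log₂(2πe(σ² + 1/12))` for integer-valued `Z` with
finite variance `σ²`. -/
theorem stmt16 {Ω : Type*} [MeasurableSpace Ω] (μ : Measure Ω) [IsProbabilityMeasure μ]
    (Z : Ω → ℤ) (hZ : Measurable Z)
    (hL2 : MemLp (fun ω => (Z ω : ℝ)) 2 μ) :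
    intEntropy μ Z ≤ (1 / 2) * Real.logb 2
      (2 * Real.pi * Real.exp 1 * (variance (fun ω => (Z ω : ℝ)) μ + 1 / 12)) := by
  set p : ℤ → ℝ := fun i ↦ μ.real (Z ⁻¹' {i})
  have hentropy : intEntropy μ Z = (∑' i, negMulLog (p i)) / log 2 := by
    rw [intEntropy, ← tsum_neg, ← tsum_div_const]
    refine tsum_congr fun i ↦ ?_
    simp only [negMulLog, logb, measureReal_def, p]
    ring
  have hp : HasSum p 1 := by
    simpa using
      hasSum_measureReal_preimage_singleton_mul (μ := μ) (F := fun _ ↦ 1) hZ (integrable_const 1)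
  have hvar : HasSum (fun i ↦ p i * (i - μ[fun ω ↦ (Z ω : ℝ)]) ^ 2)
      (variance (fun ω ↦ (Z ω : ℝ)) μ) := by
    rw [variance_eq_integral hL2.aemeasurable]
    exact hasSum_measureReal_preimage_singleton_mul hZ (hL2.sub (memLp_const _)).integrable_sq
  rw [hentropy, logb, ← mul_div_assoc]
  gcongr
  linarith [tsum_negMulLog_le_log_variance (fun i ↦ measureReal_nonneg) hp hvar]
end
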